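/- Assume d is not a square in F. Let Ω : T(F) → ℂ^× be a group homomorphism and B : GL₂(F) → ℂ a function with B(t·g·k) = Ω(t)·B(g) for all t ∈ T(F), g ∈ GL₂(F), k ∈ I. Let C ≥ 2 be an integer such that Ω is nontrivial on U_{C−1}. Then B(diag(ϖ^r, 1)·w) = 0 for every integer r with 0 ≤ r ≤ C − 2. -/

import Mathlib

open Matrix

noncomputable section

abbrev Zm0 : Type := WithZero (Multiplicative ℤ)

/-- `ev n` is the value (in `ℤₘ₀ = WithZero (Multiplicative ℤ)`) of an element of additive
valuation `n`; thus `x ∈ 𝔭^n` iff `v x ≤ ev n`, `x ∈ 𝔬` iff `v x ≤ ev 0`, and `x ∈ 𝔬^×` iff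
`v x = ev 0`. -/
def ev (n : ℤ) : Zm0 := ((Multiplicative.ofAdd (-n) : Multiplicative ℤ) : Zm0)

variable {F : Type*} [Field F]

/-- the matrix t(x,y) = [[x, cy],[−ay, x−by]] -/
def tmat (a b c x y : F) : Matrix (Fin 2) (Fin 2) F :=
  !![x, c * y; -(a * y), x - b * y]

/-- the torus T(F) ⊆ GL₂(F), as a set of matrices -/
def TSet (a b c : F) : Set (Matrix (Fin 2) (Fin 2) F) :=
  {m | ∃ x y : F, x ^ 2 - b * x * y + a * c * y ^ 2 ≠ 0 ∧ m = tmat a b c x y}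

def wmat (F : Type*) [Field F] : Matrix (Fin 2) (Fin 2) F := !![0, 1; -1, 0]

/-- GL₂(𝔬) : integral entries and unit determinant -/
def GL2O (v : Valuation F Zm0) : Set (Matrix (Fin 2) (Fin 2) F) :=
  {g | (∀ i j, v (g i j) ≤ ev 0) ∧ v g.det = ev 0}

/-- the Iwahori subgroup I = { g ∈ GL₂(𝔬) : g₂₁ ∈ 𝔭 } -/
def Iwahori (v : Valuation F Zm0) : Set (Matrix (Fin 2) (Fin 2) F) :=
  {g | g ∈ GL2O v ∧ v (g 1 0) ≤ ev 1}

/-- membership in U_m ⊆ T(F): U_0 = T(F) ∩ GL₂(𝔬), and for m ≥ 1,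
U_m = { t ∈ T(F) : t − 1 ∈ ϖ^m·M₂(𝔬) } -/
def Umem (v : Valuation F Zm0) (a b c : F) (m : ℕ) (t : Matrix (Fin 2) (Fin 2) F) : Prop :=
  t ∈ TSet a b c ∧
    (if m = 0 then (∀ i j, v (t i j) ≤ ev 0) ∧ v t.det = ev 0
     else ∀ i j, v ((t - 1) i j) ≤ ev m)

/-!
Put `g = diag(ϖ^r, 1) w = !![0, ϖ^r; -1, 0]`. Conjugation by `g` swaps the diagonal entries and
multiplies the upper right entry by `ϖ^r` and the lower left one by `ϖ^(-r)`, so for `r < m` it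
maps the principal congruence subgroup `1 + 𝔭^m M₂(𝔬)` into the Iwahori subgroup `I`. Taking
`t ∈ U_{C-1}` with `Ω t ≠ 1` and `k = (g⁻¹ t g)⁻¹ ∈ I` we get `t g k = g`, hence
`B g = Ω t · B g` and so `B g = 0`.
-/

lemma ev_eq_exp (n : ℤ) : ev n = WithZero.exp (-n) := rfl

@[simp] lemma ev_zero : ev 0 = 1 := rfl

lemma ev_le_ev {m n : ℤ} : ev m ≤ ev n ↔ n ≤ m := by
  rw [ev_eq_exp, ev_eq_exp, WithZero.exp_le_exp, neg_le_neg_iff]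

lemma ev_lt_ev {m n : ℤ} : ev m < ev n ↔ n < m := by
  rw [ev_eq_exp, ev_eq_exp, WithZero.exp_lt_exp, neg_lt_neg_iff]

lemma ev_add (m n : ℤ) : ev (m + n) = ev m * ev n := by
  rw [ev_eq_exp, ev_eq_exp, ev_eq_exp, neg_add, WithZero.exp_add]

lemma ev_ne_zero (n : ℤ) : ev n ≠ 0 := WithZero.coe_ne_zero

lemma ev_natCast (n : ℕ) : ev n = ev 1 ^ n := by
  rw [ev_eq_exp, ev_eq_exp, ← WithZero.exp_nsmul, nsmul_eq_mul, mul_neg, mul_one]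

lemma ev_natCast_le_one (m : ℕ) : ev m ≤ 1 := ev_le_ev.2 m.cast_nonneg

lemma diagonal_mul_wmat (π : F) : !![π, 0; 0, 1] * wmat F = !![0, π; -1, 0] := by
  simp [wmat]

lemma antidiag_inv {π : F} (hπ : π ≠ 0) : !![0, π; -1, 0]⁻¹ = !![0, -1; π⁻¹, 0] :=
  inv_eq_left_inv (by rw [mul_fin_two, one_fin_two]; simp [hπ])

lemma antidiag_inv_mul_mul_antidiag {π : F} (hπ : π ≠ 0) (t : Matrix (Fin 2) (Fin 2) F) :
    !![0, π; -1, 0]⁻¹ * t * !![0, π; -1, 0] = !![t 1 1, -(π * t 1 0); -(t 0 1 / π), t 0 0] := by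
  rw [antidiag_inv hπ, eta_fin_two t, mul_fin_two, mul_fin_two]
  simp [hπ, mul_comm _ π, div_eq_inv_mul]

lemma mul_mul_inv_conj_eq {R n : Type*} [CommRing R] [Fintype n] [DecidableEq n]
    {g t : Matrix n n R} (hg : IsUnit g.det) (hconj : IsUnit (g⁻¹ * t * g).det) :
    t * g * (g⁻¹ * t * g)⁻¹ = g :=
  calc t * g * (g⁻¹ * t * g)⁻¹ = g * (g⁻¹ * t * g) * (g⁻¹ * t * g)⁻¹ := by
        rw [mul_assoc g⁻¹, mul_nonsing_inv_cancel_left _ _ hg]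
    _ = g := mul_nonsing_inv_cancel_right _ _ hconj

section Valuation

variable (v : Valuation F Zm0)

def principalCongruence (m : ℕ) : Set (Matrix (Fin 2) (Fin 2) F) :=
  {t | ∀ i j, v ((t - 1) i j) ≤ ev m}

variable {v}

lemma ne_zero_of_valuation_eq_ev {x : F} {n : ℤ} (hx : v x = ev n) : x ≠ 0 := by
  rintro rfl
  exact ev_ne_zero n (by simpa using hx.symm)

lemma valuation_entry_le_one_of_mem_principalCongruence {m : ℕ} {t : Matrix (Fin 2) (Fin 2) F}
    (ht : t ∈ principalCongruence v m) (i j : Fin 2) : v (t i j) ≤ 1 := by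
  have h1 : v ((1 : Matrix (Fin 2) (Fin 2) F) i j) ≤ 1 := by
    rw [Matrix.one_apply]; split_ifs <;> simp
  simpa using v.map_add_le ((ht i j).trans (ev_natCast_le_one m)) h1

lemma valuation_det_eq_one_of_mem_principalCongruence {m : ℕ} (hm : 1 ≤ m)
    {t : Matrix (Fin 2) (Fin 2) F} (ht : t ∈ principalCongruence v m) : v t.det = 1 := by
  have h00 : v (t 0 0 - 1) ≤ ev m := by simpa using ht 0 0
  have h01 : v (t 0 1) ≤ ev m := by simpa using ht 0 1
  have h10 : v (t 1 0) ≤ ev m := by simpa using ht 1 0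
  have h11 : v (t 1 1 - 1) ≤ ev m := by simpa using ht 1 1
  have hdet : t.det - 1 = (t 0 0 - 1) * t 1 1 + (t 1 1 - 1) - t 0 1 * t 1 0 := by
    rw [det_fin_two]; ring
  have hsmall : v (t.det - 1) ≤ ev m := by
    rw [hdet]
    refine v.map_sub_le (v.map_add_le ?_ h11) ?_ <;> rw [map_mul]
    · exact mul_le_of_le_of_le_one h00 (valuation_entry_le_one_of_mem_principalCongruence ht 1 1)
    · exact mul_le_of_le_of_le_one h01 (valuation_entry_le_one_of_mem_principalCongruence ht 1 0)
  have hlt : ev m < 1 := by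
    rw [← ev_zero]; exact ev_lt_ev.2 (by exact_mod_cast hm)
  simpa using v.map_eq_of_sub_lt (x := 1) (hsmall.trans_lt (by simpa using hlt))

lemma Iwahori.isUnit_det {k : Matrix (Fin 2) (Fin 2) F} (hk : k ∈ Iwahori v) : IsUnit k.det :=
  isUnit_iff_ne_zero.2 (ne_zero_of_valuation_eq_ev hk.1.2)

lemma Iwahori.inv_mem {k : Matrix (Fin 2) (Fin 2) F} (hk : k ∈ Iwahori v) : k⁻¹ ∈ Iwahori v := by
  obtain ⟨⟨hent, hdet⟩, h10⟩ := hk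
  simp only [ev_zero] at hent hdet
  have hv : ∀ i j, v (k⁻¹ i j) = v (k.adjugate i j) := by
    intro i j
    rw [Matrix.inv_def, Ring.inverse_eq_inv', Matrix.smul_apply, smul_eq_mul, map_mul, map_inv₀, hdet,
      inv_one, one_mul]
  refine ⟨⟨fun i j => ?_, ?_⟩, ?_⟩
  · rw [hv, adjugate_fin_two]
    fin_cases i <;> fin_cases j <;> simp [hent]
  · rw [det_nonsing_inv, Ring.inverse_eq_inv', map_inv₀, hdet, inv_one, ev_zero]
  · rw [hv, adjugate_fin_two]
    simpa using h10

lemma antidiag_conj_mem_Iwahori {π : F} {r m : ℕ} (hπ : v π = ev r) (hrm : r < m)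
    {t : Matrix (Fin 2) (Fin 2) F} (ht : t ∈ principalCongruence v m) :
    !![0, π; -1, 0]⁻¹ * t * !![0, π; -1, 0] ∈ Iwahori v := by
  have hπ0 : π ≠ 0 := ne_zero_of_valuation_eq_ev hπ
  have h01 : v (t 0 1) ≤ ev m := by simpa using ht 0 1
  have h10 : v (t 1 0) ≤ ev m := by simpa using ht 1 0
  have hint := valuation_entry_le_one_of_mem_principalCongruence ht
  have hupper : v (-(π * t 1 0)) ≤ 1 := by
    rw [Valuation.map_neg, map_mul, hπ]
    calc ev r * v (t 1 0) ≤ ev r * ev m := mul_le_mul' le_rfl h10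
      _ = ev (r + m) := (ev_add _ _).symm
      _ ≤ ev 0 := ev_le_ev.2 (by omega)
      _ = 1 := ev_zero
  have hlower : v (-(t 0 1 / π)) ≤ ev 1 := by
    rw [Valuation.map_neg, map_div₀, hπ, div_le_iff₀ (zero_lt_iff.2 (ev_ne_zero r)), ← ev_add]
    exact h01.trans (ev_le_ev.2 (by omega))
  have hdet : (!![t 1 1, -(π * t 1 0); -(t 0 1 / π), t 0 0]).det = t.det := by
    rw [det_fin_two_of, det_fin_two]
    field_simp
  rw [antidiag_inv_mul_mul_antidiag hπ0]
  refine ⟨⟨fun i j => ?_, ?_⟩, ?_⟩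
  · rw [ev_zero]
    fin_cases i <;> fin_cases j
    exacts [hint 1 1, hupper, hlower.trans (ev_le_ev.2 zero_le_one) |>.trans_eq ev_zero, hint 0 0]
  · rw [hdet, ev_zero]
    exact valuation_det_eq_one_of_mem_principalCongruence (by omega) ht
  · exact hlower

end Valuation

theorem stmt9_general
    (v : Valuation F Zm0) (ϖ : F) (hϖ : v ϖ = ev 1)
    (a b c : F)
    (Ω : Matrix (Fin 2) (Fin 2) F → ℂ)
    (B : Matrix (Fin 2) (Fin 2) F → ℂ)
    (hB : ∀ t g k, t ∈ TSet a b c → k ∈ Iwahori v → B (t * g * k) = Ω t * B g)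
    (C : ℕ) (hC : 2 ≤ C)
    (hnontriv : ∃ t, Umem v a b c (C - 1) t ∧ Ω t ≠ 1) :
    ∀ r : ℕ, r ≤ C - 2 → B (!![ϖ ^ r, 0; 0, 1] * wmat F) = 0 := by
  intro r hr
  obtain ⟨t, ⟨htT, htU⟩, hΩt⟩ := hnontriv
  have ht : t ∈ principalCongruence v (C - 1) := by rwa [if_neg (by omega)] at htU
  have hϖr : v (ϖ ^ r) = ev r := by rw [map_pow, hϖ, ev_natCast]
  rw [diagonal_mul_wmat]
  set g : Matrix (Fin 2) (Fin 2) F := !![0, ϖ ^ r; -1, 0]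
  have hg : IsUnit g.det := by
    simpa [g, det_fin_two_of] using ne_zero_of_valuation_eq_ev hϖr
  have hk : g⁻¹ * t * g ∈ Iwahori v := antidiag_conj_mem_Iwahori hϖr (by omega) ht
  have hBg := hB t g _ htT (Iwahori.inv_mem hk)
  rw [mul_mul_inv_conj_eq hg (Iwahori.isUnit_det hk)] at hBg
  by_contra hBg0
  exact hΩt ((mul_eq_right₀ hBg0).1 hBg.symm)

/-- Assume d is not a square.  If Ω : T(F) → ℂ^× is a homomorphism,
B(t·g·k) = Ω(t)·B(g) for t ∈ T(F), k ∈ I, and C ≥ 2 is such that Ω is nontrivial on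
U_{C−1}, then B(diag(ϖ^r,1)·w) = 0 for 0 ≤ r ≤ C − 2. -/
theorem stmt9
    (v : Valuation F Zm0) (ϖ : F) (hϖ : v ϖ = ev 1)
    (a b c : F)
    (hao : v a ≤ ev 0) (hbo : v b ≤ ev 0) (hc : v c = ev 0)
    (hd0 : b ^ 2 - 4 * (a * c) ≠ 0)
    (hnonsq : ∀ s : F, s ^ 2 ≠ b ^ 2 - 4 * (a * c))
    (Ω : Matrix (Fin 2) (Fin 2) F → ℂ)
    (hΩmul : ∀ s t, s ∈ TSet a b c → t ∈ TSet a b c → Ω (s * t) = Ω s * Ω t)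
    (hΩne : ∀ t ∈ TSet a b c, Ω t ≠ 0)
    (B : Matrix (Fin 2) (Fin 2) F → ℂ)
    (hB : ∀ t g k, t ∈ TSet a b c → k ∈ Iwahori v → B (t * g * k) = Ω t * B g)
    (C : ℕ) (hC : 2 ≤ C)
    (hnontriv : ∃ t, Umem v a b c (C - 1) t ∧ Ω t ≠ 1) :
    ∀ r : ℕ, r ≤ C - 2 → B (!![ϖ ^ r, 0; 0, 1] * wmat F) = 0 :=
  stmt9_general v ϖ hϖ a b c Ω B hB C hC hnontriv
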